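/- arXiv:1701.07189 — 14 statements merged into one kernel-verified Lean document; each statement's English description precedes it below -/
import Mathlib

section
/- Let S be an ordered semigroup and I an ideal of S (i.e., SI ⊆ I, IS ⊆ I, and (I] = I where (I] = {t ∈ S : t ≤ h for some h ∈ I}). Then I equals the kernel K(S) (the intersection of all ideals of S) if and only if I is simple (i.e., I contains no proper ideal as an ordered subsemigroup). -/
variable {S : Type*} [Semigroup S] [PartialOrder S]
  [CovariantClass S S (· * ·) (· ≤ ·)]
  [CovariantClass S S (Function.swap (· * ·)) (· ≤ ·)]

/-- `ppow a n` is the `(n+1)`-st power of `a` in a semigroup. -/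
def ppow (a : S) : ℕ → S
  | 0 => a
  | n + 1 => ppow a n * a

/-- `(H]`, the downward closure of `H`. -/
def dcl (H : Set S) : Set S := {t | ∃ h ∈ H, t ≤ h}

/-- `K` is an (two-sided) ideal of the ordered subsemigroup `T`. -/
def IsIdealIn (T K : Set S) : Prop :=
  K.Nonempty ∧ K ⊆ T ∧ (∀ s ∈ T, ∀ x ∈ K, s * x ∈ K ∧ x * s ∈ K) ∧
    ∀ t ∈ T, ∀ x ∈ K, t ≤ x → t ∈ K

/-- `K` is a left ideal of the ordered subsemigroup `T`. -/
def IsLeftIdealIn (T K : Set S) : Prop :=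
  K.Nonempty ∧ K ⊆ T ∧ (∀ s ∈ T, ∀ x ∈ K, s * x ∈ K) ∧
    ∀ t ∈ T, ∀ x ∈ K, t ≤ x → t ∈ K

/-- `T` is simple: it has no proper ideal. -/
def SimpleIn (T : Set S) : Prop := ∀ K : Set S, IsIdealIn T K → K = T

/-- `T` is left simple: it has no proper left ideal. -/
def LeftSimpleIn (T : Set S) : Prop := ∀ K : Set S, IsLeftIdealIn T K → K = T

/-- `T` is a nil extension of `K`: `K` is an ideal of `T` and every element of
`T` has a power in `K`. -/
def IsNilExtOf (T K : Set S) : Prop :=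
  IsIdealIn T K ∧ ∀ a ∈ T, ∃ m : ℕ, ppow a m ∈ K

/-- `T` is an ordered regular subsemigroup. -/
def OrdRegularIn (T : Set S) : Prop := ∀ a ∈ T, ∃ x ∈ T, a ≤ a * x * a

/-- `T` is a right regular subsemigroup. -/
def RightRegularIn (T : Set S) : Prop := ∀ a ∈ T, ∃ x ∈ T, a ≤ a * a * x

/-- `T` is a completely regular subsemigroup. -/
def CompRegularIn (T : Set S) : Prop := ∀ a ∈ T, ∃ x ∈ T, a ≤ a * a * x * (a * a)

/-- A complete semilattice congruence on an ordered semigroup. -/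
structure CompleteSemilatticeCongruence (ρ : S → S → Prop) : Prop where
  equiv : Equivalence ρ
  mul_left : ∀ a b c : S, ρ a b → ρ (c * a) (c * b)
  mul_right : ∀ a b c : S, ρ a b → ρ (a * c) (b * c)
  sq : ∀ a : S, ρ a (a * a)
  comm : ∀ a b : S, ρ (a * b) (b * a)
  complete : ∀ a b : S, a ≤ b → ρ a (a * b)

/-- The `ρ`-class (component) of `a`. -/
def cls (ρ : S → S → Prop) (a : S) : Set S := {x | ρ x a}

/-- `a ∣ b` in `S¹`:  `b ≤ x a y` for some `x, y ∈ S¹`. -/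
def dvd1 (a b : S) : Prop :=
  b ≤ a ∨ (∃ x : S, b ≤ x * a) ∨ (∃ y : S, b ≤ a * y) ∨ ∃ x y : S, b ≤ x * a * y

/-- `a` is intra-regular: `a ≤ x a² y` for some `x, y ∈ S¹`. -/
def IntraReg (a : S) : Prop :=
  a ≤ a * a ∨ (∃ x : S, a ≤ x * (a * a)) ∨ (∃ y : S, a ≤ a * a * y) ∨
    ∃ x y : S, a ≤ x * (a * a) * y

/-- An ideal `I` of an ordered semigroup `S` is the kernel (intersection of all
ideals of `S`) if and only if `I` is simple. -/
theorem ideal_eq_kernel_iff_simple (I : Set S) (hI : IsIdealIn Set.univ I) :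
    I = ⋂₀ {J : Set S | IsIdealIn Set.univ J} ↔ SimpleIn I := by
  obtain ⟨⟨i0, hi0⟩, -, hImul, hIdcl⟩ := hI
  constructor
  · intro hker K hK
    obtain ⟨⟨k0, hk0⟩, hKsub, hKmul, hKdcl⟩ := hK
    -- J = (I K I], an ideal of S containing the kernel I
    set J : Set S := {t | ∃ a ∈ I, ∃ x ∈ K, ∃ b ∈ I, t ≤ a * x * b} with hJdef
    have hJ : IsIdealIn Set.univ J := by
      refine ⟨⟨i0 * k0 * i0, i0, hi0, k0, hk0, i0, hi0, le_refl _⟩,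
        Set.subset_univ _, ?_, ?_⟩
      · rintro s - t ⟨a, ha, x, hx, b, hb, hle⟩
        constructor
        · refine ⟨s * a, (hImul s trivial a ha).1, x, hx, b, hb, ?_⟩
          calc s * t ≤ s * (a * x * b) := mul_le_mul_right hle s
            _ = s * a * x * b := by simp [mul_assoc]
        · refine ⟨a, ha, x, hx, b * s, (hImul s trivial b hb).2, ?_⟩
          calc t * s ≤ a * x * b * s := mul_le_mul_left hle s
            _ = a * x * (b * s) := by simp [mul_assoc]
      · rintro t - u ⟨a, ha, x, hx, b, hb, hle⟩ htu
        exact ⟨a, ha, x, hx, b, hb, htu.trans hle⟩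
    have hIJ : I ⊆ J := hker ▸ Set.sInter_subset_of_mem hJ
    refine subset_antisymm hKsub ?_
    intro a ha
    obtain ⟨i, hi, x, hx, i', hi', hle⟩ := hIJ ha
    exact hKdcl a ha _ ((hKmul i' hi' _ ((hKmul i hi x hx).1)).2) hle
  · intro hsimp
    refine subset_antisymm ?_ (Set.sInter_subset_of_mem ⟨⟨i0, hi0⟩,
      Set.subset_univ _, hImul, hIdcl⟩)
    intro a ha
    rintro J ⟨⟨j0, hj0⟩, -, hJmul, hJdcl⟩
    -- K = (I J I] ∩ I is an ideal of I, hence equals I by simplicity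
    set K : Set S := {t | t ∈ I ∧ ∃ a ∈ I, ∃ x ∈ J, ∃ b ∈ I, t ≤ a * x * b}
      with hKdef
    have hK : IsIdealIn I K := by
      refine ⟨⟨i0 * j0 * i0, (hImul (i0 * j0) trivial i0 hi0).1,
        i0, hi0, j0, hj0, i0, hi0, le_refl _⟩, fun t ht => ht.1, ?_, ?_⟩
      · rintro s hs t ⟨htI, a, ha', x, hx, b, hb, hle⟩
        constructor
        · refine ⟨(hImul s trivial t htI).1, s * a, (hImul s trivial a ha').1,
            x, hx, b, hb, ?_⟩
          calc s * t ≤ s * (a * x * b) := mul_le_mul_right hle s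
            _ = s * a * x * b := by simp [mul_assoc]
        · refine ⟨(hImul s trivial t htI).2, a, ha', x, hx, b * s,
            (hImul s trivial b hb).2, ?_⟩
          calc t * s ≤ a * x * b * s := mul_le_mul_left hle s
            _ = a * x * (b * s) := by simp [mul_assoc]
      · rintro t ht u ⟨-, a', ha', x, hx, b, hb, hle⟩ htu
        exact ⟨ht, a', ha', x, hx, b, hb, htu.trans hle⟩
    have := hsimp K hK
    rw [← this] at ha
    obtain ⟨-, i, -, x, hx, i', -, hle⟩ := ha
    exact hJdcl a trivial _ ((hJmul i' trivial _ ((hJmul i trivial x hx).1)).2) hle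
end

section
/- Let S be an ordered semigroup which is a nil extension of an ordered subsemigroup K that is left simple and right regular (K is an ideal of S, every element of S has a power in K, K has no proper left ideal, and every a ∈ K satisfies a ≤ a²x for some x ∈ K). Then for all a, b ∈ S there exists n ∈ ℕ such that a^n ∈ (a^{2n} S b]. -/
variable {S : Type*} [Semigroup S] [PartialOrder S]
  [CovariantClass S S (· * ·) (· ≤ ·)]
  [CovariantClass S S (Function.swap (· * ·)) (· ≤ ·)]

lemma ppow_addp (a : S) : ∀ n m : ℕ, ppow a n * ppow a m = ppow a (n + m + 1)
  | _, 0 => rfl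
  | n, m + 1 => by
    rw [show ppow a (m + 1) = ppow a m * a from rfl, ← mul_assoc, ppow_addp a n m]
    rfl

/-- If `S` is a nil extension of a left simple and right regular ideal `K`,
then for all `a, b ∈ S` there is `n` with `a^n ∈ (a^{2n} S b]`
(here `ppow a n = a^(n+1)` and `ppow a (2*n+1) = a^(2(n+1))`). -/
theorem nilext_left_simple_right_regular_pow (K : Set S)
    (hK : IsIdealIn Set.univ K) (hnil : ∀ a : S, ∃ m : ℕ, ppow a m ∈ K)
    (hls : LeftSimpleIn K) (hrr : RightRegularIn K) :
    ∀ a b : S, ∃ n : ℕ,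
      ppow a n ∈ dcl {y : S | ∃ s : S, y = ppow a (2 * n + 1) * s * b} := by
  intro a b
  obtain ⟨n, hn⟩ := hnil a
  obtain ⟨⟨k0, hk0⟩, -, hid, -⟩ := hK
  set u := ppow a n with hu
  obtain ⟨x, hxK, hx⟩ := hrr u hn
  have htK : k0 * b ∈ K := (hid b (Set.mem_univ b) k0 hk0).2
  set L : Set S := {z | z ∈ K ∧ ∃ w ∈ K, z ≤ w * (k0 * b)} with hLdef
  have hLid : IsLeftIdealIn K L := by
    refine ⟨⟨k0 * (k0 * b), (hid k0 (Set.mem_univ k0) _ htK).1, k0, hk0, le_rfl⟩,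
      fun z hz => hz.1, ?_, ?_⟩
    · rintro s hs z ⟨hzK, w, hwK, hzw⟩
      refine ⟨(hid s (Set.mem_univ s) z hzK).1, s * w,
        (hid s (Set.mem_univ s) w hwK).1, ?_⟩
      calc s * z ≤ s * (w * (k0 * b)) := mul_le_mul_right hzw s
        _ = s * w * (k0 * b) := (mul_assoc _ _ _).symm
    · rintro t ht z ⟨hzK, w, hwK, hzw⟩ htz
      exact ⟨ht, w, hwK, le_trans htz hzw⟩
  have hxL : x ∈ L := (hls L hLid).symm ▸ hxK
  obtain ⟨-, w, hwK, hxw⟩ := hxL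
  have huu : u * u = ppow a (2 * n + 1) := by
    rw [hu, ppow_addp, two_mul]
  refine ⟨n, ppow a (2 * n + 1) * (w * k0) * b, ⟨w * k0, rfl⟩, ?_⟩
  calc ppow a n ≤ u * u * x := hx
    _ ≤ u * u * (w * (k0 * b)) := mul_le_mul_right hxw _
    _ = u * u * (w * k0) * b := by simp only [mul_assoc]
    _ = ppow a (2 * n + 1) * (w * k0) * b := by rw [huu]
end

section
/- Let S be an ordered semigroup which is a nil extension of a left simple and right regular ordered subsemigroup K. If a ∈ S and b ∈ S is right regular (b ≤ b²z for some z ∈ S) and a ≤ ba, then a ≤ a²x for some x ∈ S. -/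
variable {S : Type*} [Semigroup S] [PartialOrder S]
  [CovariantClass S S (· * ·) (· ≤ ·)]
  [CovariantClass S S (Function.swap (· * ·)) (· ≤ ·)]

/-- If `S` is a nil extension of a left simple and right regular ideal `K`,
`b` is right regular in `S`, and `a ≤ b a`, then `a ≤ a² x` for some `x`. -/
theorem nilext_left_simple_right_regular_absorb (K : Set S)
    (hK : IsIdealIn Set.univ K) (hnil : ∀ a : S, ∃ m : ℕ, ppow a m ∈ K)
    (hls : LeftSimpleIn K) (hrr : RightRegularIn K)
    (a b z : S) (hb : b ≤ b * b * z) (hab : a ≤ b * a) :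
    ∃ x : S, a ≤ a * a * x := by
  obtain ⟨m, hm⟩ := hnil b
  have key : ∀ n : ℕ, a ≤ ppow b n * a := by
    intro n
    induction n with
    | zero => exact hab
    | succ n ih =>
      calc a ≤ ppow b n * a := ih
        _ ≤ ppow b n * (b * a) := mul_le_mul_right hab _
        _ = ppow b (n+1) * a := by rw [ppow]; rw [mul_assoc]
  have hKa : ppow b m * a ∈ K := (hK.2.2.1 a trivial _ hm).2
  have haK : a ∈ K := hK.2.2.2 a trivial _ hKa (key m)
  obtain ⟨x, hx, hax⟩ := hrr a haK
  exact ⟨x, hax⟩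
end

section
/- An ordered semigroup S is a nil extension of a left simple and right regular ordered subsemigroup if and only if: (1) for all a, b ∈ S there exists n ∈ ℕ with a^n ∈ (a^{2n} S b], and (2) for all a ∈ S and all right regular b ∈ S, a ≤ ba implies a ≤ a²x for some x ∈ S. -/
variable {S : Type*} [Semigroup S] [PartialOrder S]
  [CovariantClass S S (· * ·) (· ≤ ·)]
  [CovariantClass S S (Function.swap (· * ·)) (· ≤ ·)]

section Aux

private lemma ppow_add' (a : S) (m n : ℕ) :
    ppow a (m + n + 1) = ppow a m * ppow a n := by
  induction n with
  | zero => rfl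
  | succ n ih =>
    show ppow a (m + n + 1) * a = ppow a m * (ppow a n * a)
    rw [ih, mul_assoc]

private lemma mul_ppow' (a : S) (k : ℕ) : a * ppow a k = ppow a (k + 1) := by
  induction k with
  | zero => rfl
  | succ k ih =>
    show a * (ppow a k * a) = ppow a (k + 1) * a
    rw [← mul_assoc, ih]

/-- From `b ≤ b²z` we get `b ≤ b^{k+1} w` for every `k`. -/
private lemma le_ppow_mul' {b z : S} (h : b ≤ b * b * z) :
    ∀ k : ℕ, ∃ w : S, b ≤ ppow b k * w := by
  intro k
  induction k with
  | zero => exact ⟨b * z, by calc b ≤ b * b * z := h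
                                _ = ppow b 0 * (b * z) := mul_assoc b b z⟩
  | succ k ih =>
    obtain ⟨w, hw⟩ := ih
    refine ⟨w * z, ?_⟩
    calc b ≤ b * b * z := h
      _ ≤ b * (ppow b k * w) * z := mul_le_mul_left (mul_le_mul_right hw b) z
      _ = ppow b (k + 1) * (w * z) := by rw [← mul_assoc, mul_ppow', mul_assoc]

/-- From `b ≤ b²` we get `b ≤ b²z` for some `z`. -/
private lemma sq_to_rreg' {b : S} (h : b ≤ b * b) : ∃ z : S, b ≤ b * b * z :=
  ⟨b, by calc b ≤ b * b := h
           _ ≤ b * (b * b) := mul_le_mul_right h b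
           _ = b * b * b := (mul_assoc b b b).symm⟩

/-- Key consequence of condition (1): if `a ≤ a²x` then for every `b` there is
`w` with `a ≤ a w b`. -/
private lemma key_lemM'
    (H1 : ∀ a b : S, ∃ n : ℕ,
      ppow a n ∈ dcl {y : S | ∃ s : S, y = ppow a (2 * n + 1) * s * b})
    {a x : S} (ha : a ≤ a * a * x) (b : S) : ∃ w : S, a ≤ a * w * b := by
  set c := a * x with hc
  have hac : a ≤ a * c := by rw [hc, ← mul_assoc]; exact ha
  have hpow : ∀ k : ℕ, a ≤ a * ppow c k := by
    intro k
    induction k with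
    | zero => exact hac
    | succ k ih =>
      calc a ≤ a * c := hac
        _ ≤ a * ppow c k * c := mul_le_mul_left ih c
        _ = a * ppow c (k + 1) := by rw [mul_assoc]; rfl
  obtain ⟨n, h, ⟨s, rfl⟩, hle⟩ := H1 c b
  refine ⟨ppow c (2 * n + 1) * s, ?_⟩
  calc a ≤ a * ppow c n := hpow n
    _ ≤ a * (ppow c (2 * n + 1) * s * b) := mul_le_mul_right hle a
    _ = a * (ppow c (2 * n + 1) * s) * b := by rw [← mul_assoc, ← mul_assoc]

end Aux

/-- An ordered semigroup `S` is a nil extension of a left simple and right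
regular ordered subsemigroup if and only if (1) for all `a, b ∈ S` there is
`n` with `a^n ∈ (a^{2n} S b]`, and (2) for all `a ∈ S` and right regular
`b ∈ S`, `a ≤ b a` implies `a ≤ a² x` for some `x ∈ S`. -/
theorem nilext_left_simple_right_regular_iff [Nonempty S] :
    (∃ K : Set S, IsIdealIn Set.univ K ∧ (∀ a : S, ∃ m : ℕ, ppow a m ∈ K) ∧
      LeftSimpleIn K ∧ RightRegularIn K) ↔
    ((∀ a b : S, ∃ n : ℕ,
        ppow a n ∈ dcl {y : S | ∃ s : S, y = ppow a (2 * n + 1) * s * b}) ∧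
      (∀ a b : S, (∃ z : S, b ≤ b * b * z) → a ≤ b * a →
        ∃ x : S, a ≤ a * a * x)) := by
  constructor
  · rintro ⟨K, ⟨hne, -, hmul, hcl⟩, hpow, hls, hrr⟩
    -- consequence of left simplicity: for u, v ∈ K there is k ∈ K with v ≤ k u
    have hKK : ∀ x ∈ K, ∀ y ∈ K, x * y ∈ K := fun x hx y hy =>
      (hmul x (Set.mem_univ x) y hy).1
    have hdiv : ∀ u ∈ K, ∀ v ∈ K, ∃ k ∈ K, v ≤ k * u := by
      intro u hu v hv
      have hL : IsLeftIdealIn K {t | t ∈ K ∧ ∃ k ∈ K, t ≤ k * u} := by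
        refine ⟨⟨u * u, hKK u hu u hu, u, hu, le_refl _⟩, fun t ht => ht.1,
          ?_, ?_⟩
        · rintro s hs x ⟨hxK, k, hkK, hk⟩
          refine ⟨hKK s hs x hxK, s * k, hKK s hs k hkK, ?_⟩
          calc s * x ≤ s * (k * u) := mul_le_mul_right hk s
            _ = s * k * u := (mul_assoc s k u).symm
        · rintro t htK x ⟨-, k, hkK, hk⟩ hle
          exact ⟨htK, k, hkK, hle.trans hk⟩
      have := hls _ hL
      rw [← this] at hv
      exact hv.2
    constructor
    · -- condition (1)
      intro a b
      obtain ⟨m, hm⟩ := hpow a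
      obtain ⟨p, hp⟩ := hpow b
      obtain ⟨x, hxK, hx⟩ := hrr _ hm
      obtain ⟨k, hkK, hkx⟩ := hdiv (ppow b p) hp x hxK
      have hsq : ppow a m * ppow a m = ppow a (2 * m + 1) := by
        rw [two_mul, ppow_add']
      have hmain : ppow a m ≤ ppow a (2 * m + 1) * (k * ppow b p) := by
        calc ppow a m ≤ ppow a m * ppow a m * x := hx
          _ ≤ ppow a m * ppow a m * (k * ppow b p) :=
            mul_le_mul_right hkx _
          _ = ppow a (2 * m + 1) * (k * ppow b p) := by rw [hsq]
      refine ⟨m, ?_⟩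
      cases p with
      | zero =>
        exact ⟨ppow a (2 * m + 1) * k * b, ⟨k, rfl⟩,
          by rw [mul_assoc]; exact hmain⟩
      | succ q =>
        refine ⟨ppow a (2 * m + 1) * (k * ppow b q) * b, ⟨k * ppow b q, rfl⟩,
          ?_⟩
        calc ppow a m ≤ ppow a (2 * m + 1) * (k * ppow b (q + 1)) := hmain
          _ = ppow a (2 * m + 1) * (k * ppow b q) * b := by
            show ppow a (2 * m + 1) * (k * (ppow b q * b)) = _
            simp only [mul_assoc]
    · -- condition (2)
      rintro a b ⟨z, hz⟩ hba
      obtain ⟨m, hm⟩ := hpow b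
      obtain ⟨w, hw⟩ := le_ppow_mul' hz m
      have hbK : b ∈ K :=
        hcl b (Set.mem_univ b) _ ((hmul w (Set.mem_univ w) _ hm).2) hw
      have haK : a ∈ K :=
        hcl a (Set.mem_univ a) _ ((hmul a (Set.mem_univ a) b hbK).2) hba
      obtain ⟨x, -, hx⟩ := hrr a haK
      exact ⟨x, hx⟩
  · rintro ⟨H1, H2⟩
    set K : Set S := {a | ∃ x : S, a ≤ a * a * x} with hK
    -- K is closed under right multiplication by S
    have hKS : ∀ a ∈ K, ∀ s : S, a * s ∈ K := by
      rintro a ⟨x, hx⟩ s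
      obtain ⟨w, hw⟩ := key_lemM' H1 hx a
      have hG : a * w ≤ (a * w) * (a * w) := by
        calc a * w ≤ a * w * a * w := mul_le_mul_left hw w
          _ = (a * w) * (a * w) := by rw [mul_assoc]
      have hGK : ∃ z : S, a * w ≤ (a * w) * (a * w) * z := sq_to_rreg' hG
      have hle : a * s ≤ (a * w) * (a * s) := by
        calc a * s ≤ a * w * a * s := mul_le_mul_left hw s
          _ = (a * w) * (a * s) := by rw [mul_assoc]
      exact H2 (a * s) (a * w) hGK hle
    -- K is closed under left multiplication by S
    have hSK : ∀ a ∈ K, ∀ s : S, s * a ∈ K := by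
      rintro a ⟨x, hx⟩ s
      obtain ⟨w, hw⟩ := key_lemM' H1 hx (s * a)
      have hB : s * (a * w) ≤ (s * (a * w)) * (s * (a * w)) := by
        calc s * (a * w) ≤ s * (a * w * (s * a) * w) :=
              mul_le_mul_right (mul_le_mul_left hw w) s
          _ = (s * (a * w)) * (s * (a * w)) := by
              simp only [mul_assoc]
      have hBK : ∃ z : S, s * (a * w) ≤ (s * (a * w)) * (s * (a * w)) * z :=
        sq_to_rreg' hB
      have hle : s * a ≤ (s * (a * w)) * (s * a) := by
        calc s * a ≤ s * (a * w * (s * a)) := mul_le_mul_right hw s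
          _ = (s * (a * w)) * (s * a) := by simp only [mul_assoc]
      exact H2 (s * a) (s * (a * w)) hBK hle
    -- K is downward closed
    have hdn : ∀ t a : S, a ∈ K → t ≤ a → t ∈ K := by
      intro t a haK ht
      obtain ⟨x, hx⟩ := haK
      obtain ⟨w, hw⟩ := key_lemM' H1 hx t
      exact H2 t (a * w) (hKS a ⟨x, hx⟩ w) (ht.trans hw)
    -- every element has a power in K
    have hpowK : ∀ a : S, ∃ n : ℕ, ppow a n ∈ K := by
      intro a
      obtain ⟨n, h, ⟨s, rfl⟩, hle⟩ := H1 a a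
      refine ⟨n, s * a, ?_⟩
      calc ppow a n ≤ ppow a (2 * n + 1) * s * a := hle
        _ = ppow a n * ppow a n * (s * a) := by
          rw [two_mul, ppow_add']; simp only [mul_assoc]
    refine ⟨K, ⟨?_, Set.subset_univ K, ?_, ?_⟩, hpowK, ?_, ?_⟩
    · obtain ⟨n, hn⟩ := hpowK (Classical.arbitrary S)
      exact ⟨_, hn⟩
    · intro s _ x hx
      exact ⟨hSK x hx s, hKS x hx s⟩
    · intro t _ x hx ht
      exact hdn t x hx ht
    · -- left simple
      rintro L ⟨⟨u, huL⟩, hsub, hmulL, hclL⟩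
      refine le_antisymm hsub ?_
      rintro v ⟨x, hx⟩
      obtain ⟨w, hw⟩ := key_lemM' H1 hx u
      have hvw : v * w ∈ K := hKS v ⟨x, hx⟩ w
      have : (v * w) * u ∈ L := hmulL (v * w) hvw u huL
      exact hclL v ⟨x, hx⟩ _ this hw
    · -- right regular
      rintro a ⟨x, hx⟩
      refine ⟨a * (x * x), hKS a ⟨x, hx⟩ (x * x), ?_⟩
      calc a ≤ a * a * x := hx
        _ ≤ a * (a * a * x) * x :=
          mul_le_mul_left (mul_le_mul_right hx a) x
        _ = a * a * (a * (x * x)) := by simp only [mul_assoc]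
end

section
/- Let S be an ordered semigroup which is a nil extension of a simple and ordered regular ideal K. Then for all a, b ∈ S there exists n ∈ ℕ such that a^n ∈ (a^n S b S a^n]. -/
variable {S : Type*} [Semigroup S] [PartialOrder S]
  [CovariantClass S S (· * ·) (· ≤ ·)]
  [CovariantClass S S (Function.swap (· * ·)) (· ≤ ·)]

theorem simple_dvd (K : Set S) (hK : IsIdealIn Set.univ K) (hs : SimpleIn K)
    (u v : S) (hu : u ∈ K) (hv : v ∈ K) :
    ∃ x ∈ K, ∃ y ∈ K, u ≤ x * v * y := by
  obtain ⟨hne, -, hmul, -⟩ := hK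
  set I : Set S := {t ∈ K | ∃ x ∈ K, ∃ y ∈ K, t ≤ x * v * y} with hI
  have hII : IsIdealIn K I := by
    refine ⟨?_, fun t ht => ht.1, ?_, ?_⟩
    · obtain ⟨k, hk⟩ := hne
      have h1 : k * v ∈ K := (hmul k trivial v hv).1
      have h2 : k * v * k ∈ K := (hmul k trivial (k * v) h1).2
      exact ⟨k * v * k, h2, k, hk, k, hk, le_refl _⟩
    · rintro s hsK t ⟨htK, x, hx, y, hy, hle⟩
      constructor
      · refine ⟨(hmul s trivial t htK).1, s * x, (hmul s trivial x hx).1, y, hy, ?_⟩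
        calc s * t ≤ s * (x * v * y) := mul_le_mul_right hle s
          _ = s * x * v * y := by simp [mul_assoc]
      · refine ⟨(hmul s trivial t htK).2, x, hx, y * s, (hmul s trivial y hy).2, ?_⟩
        calc t * s ≤ x * v * y * s := mul_le_mul_left hle s
          _ = x * v * (y * s) := by simp [mul_assoc]
    · rintro t htK w ⟨-, x, hx, y, hy, hle⟩ htw
      exact ⟨htK, x, hx, y, hy, le_trans htw hle⟩
  have := hs I hII
  have hu' : u ∈ I := this ▸ hu
  exact hu'.2

/-- If `S` is a nil extension of a simple and ordered regular ideal `K`, then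
for all `a, b ∈ S` there is `n` with `a^n ∈ (a^n S b S a^n]`. -/
theorem nilext_simple_regular_pow (K : Set S)
    (hK : IsIdealIn Set.univ K) (hnil : ∀ a : S, ∃ m : ℕ, ppow a m ∈ K)
    (hs : SimpleIn K) (hr : OrdRegularIn K) :
    ∀ a b : S, ∃ n : ℕ,
      ppow a n ∈ dcl {y : S | ∃ s t : S, y = ppow a n * s * b * t * ppow a n} := by
  intro a b
  obtain ⟨m, hm⟩ := hnil a
  refine ⟨m, ?_⟩
  set c := ppow a m with hc
  obtain ⟨z, hzK, hcz⟩ := hr c hm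
  have hmul := hK.2.2.1
  obtain ⟨k, hk⟩ := hK.1
  have hkb : k * b ∈ K := (hmul b trivial k hk).2
  have hkbk : k * b * k ∈ K := (hmul k trivial (k * b) hkb).2
  obtain ⟨x, hx, y, hy, hzle⟩ := simple_dvd K hK hs z (k * b * k) hzK hkbk
  refine ⟨c * (x * k) * b * (k * y) * c, ⟨x * k, k * y, rfl⟩, ?_⟩
  calc c ≤ c * z * c := hcz
    _ ≤ c * (x * (k * b * k) * y) * c := by
        exact mul_le_mul_left (mul_le_mul_right hzle c) c
    _ = c * (x * k) * b * (k * y) * c := by simp [mul_assoc]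
end

section
/- Let S be an ordered semigroup which is a nil extension of a simple and ordered regular ideal K. If b ∈ S is ordered regular (b ≤ byb for some y ∈ S) and a ∈ S satisfies a ≤ ba, then a ∈ (aSbSa]. -/
variable {S : Type*} [Semigroup S] [PartialOrder S]
  [CovariantClass S S (· * ·) (· ≤ ·)]
  [CovariantClass S S (Function.swap (· * ·)) (· ≤ ·)]

/-- If `S` is a nil extension of a simple and ordered regular ideal `K`, `b` is
ordered regular, and `a ≤ b a`, then `a ∈ (a S b S a]`. -/
theorem nilext_simple_regular_absorb (K : Set S)
    (hK : IsIdealIn Set.univ K) (hnil : ∀ a : S, ∃ m : ℕ, ppow a m ∈ K)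
    (hs : SimpleIn K) (hr : OrdRegularIn K)
    (a b y : S) (hb : b ≤ b * y * b) (hab : a ≤ b * a) :
    a ∈ dcl {w : S | ∃ s t : S, w = a * s * b * t * a} := by
  have key : ∀ m : ℕ, a ≤ ppow b m * a := by
    intro m
    induction m with
    | zero => exact hab
    | succ n ih =>
      calc a ≤ ppow b n * a := ih
        _ ≤ ppow b n * (b * a) := mul_le_mul_right hab _
        _ = ppow b (n+1) * a := by rw [ppow, mul_assoc]
  obtain ⟨m, hm⟩ := hnil b
  have haK : a ∈ K :=
    hK.2.2.2 a trivial (ppow b m * a) (hK.2.2.1 a trivial _ hm).2 (key m)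
  obtain ⟨x, hx, hax⟩ := hr a haK
  have h2 : a ≤ a * x * b * a := by
    calc a ≤ a * x * a := hax
      _ ≤ a * x * (b * a) := mul_le_mul_right hab _
      _ = a * x * b * a := by simp [mul_assoc]
  refine ⟨a * x * b * (a * x * b) * a, ⟨x, a * x * b, rfl⟩, ?_⟩
  calc a ≤ a * x * b * a := h2
    _ ≤ a * x * b * (a * x * b * a) := mul_le_mul_right h2 _
    _ = a * x * b * (a * x * b) * a := by simp [mul_assoc]
end

section
/- An ordered semigroup S is a nil extension of a simple and ordered regular ideal if and only if: (i) for all a, b ∈ S there exists n ∈ ℕ with a^n ∈ (a^n S b S a^n]; (ii) for all a ∈ S and ordered regular b ∈ S, a ≤ ba implies a ∈ (aSbSa]; (iii) for all a ∈ S and ordered regular b ∈ S, a ≤ ab implies a ∈ (aSbSa]; and (iv) for all a ∈ S and ordered regular b ∈ S, a ≤ b implies a is ordered regular. -/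
variable {S : Type*} [Semigroup S] [PartialOrder S]
  [CovariantClass S S (· * ·) (· ≤ ·)]
  [CovariantClass S S (Function.swap (· * ·)) (· ≤ ·)]

/-- Substitution inside a product. -/
lemma sandw {p q : S} (u v : S) (h : p ≤ q) : u * p * v ≤ u * q * v :=
  mul_le_mul_left (mul_le_mul_right h u) v

/-- Every ordered regular element lies in the kernel. -/
lemma reg_mem {K : Set S} (hK : IsIdealIn (Set.univ : Set S) K)
    (nil : ∀ a : S, ∃ m : ℕ, ppow a m ∈ K) {b y : S} (hb : b ≤ b * y * b) : b ∈ K := by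
  have h : ∀ m, b ≤ ppow (b * y) m * b := by
    intro m
    induction m with
    | zero => simpa [ppow] using hb
    | succ m ih =>
      calc b ≤ ppow (b * y) m * b := ih
        _ ≤ ppow (b * y) m * (b * y * b) := mul_le_mul_right hb _
        _ = ppow (b * y) (m + 1) * b := by simp [ppow, mul_assoc]
  obtain ⟨m, hm⟩ := nil (b * y)
  exact hK.2.2.2 b trivial _ ((hK.2.2.1 b trivial _ hm).2) (h m)

/-- In a simple ordered regular ideal, every element divides every element. -/
lemma simple_div {K : Set S} (hK : IsIdealIn (Set.univ : Set S) K) (hs : SimpleIn K)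
    (hr : OrdRegularIn K) {c : S} (hc : c ∈ K) {d : S} (hd : d ∈ K) :
    ∃ u ∈ K, ∃ v ∈ K, d ≤ u * c * v := by
  have mulK : ∀ (s : S), ∀ x ∈ K, s * x ∈ K := fun s x hx => (hK.2.2.1 s trivial x hx).1
  have mulK' : ∀ (s : S), ∀ x ∈ K, x * s ∈ K := fun s x hx => (hK.2.2.1 s trivial x hx).2
  set L : Set S := {t | t ∈ K ∧ ∃ u ∈ K, ∃ v ∈ K, t ≤ u * c * v} with hLdef
  have hL : IsIdealIn K L := by
    refine ⟨?_, fun t ht => ht.1, ?_, ?_⟩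
    · obtain ⟨y, hy, hcy⟩ := hr c hc
      refine ⟨c, hc, c * y, mulK' y c hc, y * c, mulK y c hc, ?_⟩
      calc c ≤ c * y * c := hcy
        _ ≤ c * y * (c * y * c) := mul_le_mul_right hcy _
        _ = c * y * c * (y * c) := by simp [mul_assoc]
    · intro s hs' x hx
      obtain ⟨hxK, u, hu, v, hv, hle⟩ := hx
      constructor
      · refine ⟨mulK s x hxK, s * u, mulK s u hu, v, hv, ?_⟩
        calc s * x ≤ s * (u * c * v) := mul_le_mul_right hle s
          _ = s * u * c * v := by simp [mul_assoc]
      · refine ⟨mulK' s x hxK, u, hu, v * s, mulK' s v hv, ?_⟩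
        calc x * s ≤ u * c * v * s := mul_le_mul_left hle s
          _ = u * c * (v * s) := by simp [mul_assoc]
    · rintro t ht x ⟨_, u, hu, v, hv, h2⟩ hle
      exact ⟨ht, u, hu, v, hv, hle.trans h2⟩
  have hLK : L = K := hs L hL
  have : d ∈ L := hLK.symm ▸ hd
  exact this.2

/-- `S` is a nil extension of a simple and ordered regular ideal if and only if
conditions (i)–(iv) hold. -/
theorem nilext_simple_regular_iff [Nonempty S] :
    (∃ K : Set S, IsIdealIn Set.univ K ∧ (∀ a : S, ∃ m : ℕ, ppow a m ∈ K) ∧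
      SimpleIn K ∧ OrdRegularIn K) ↔
    ((∀ a b : S, ∃ n : ℕ,
        ppow a n ∈ dcl {y : S | ∃ s t : S, y = ppow a n * s * b * t * ppow a n}) ∧
      (∀ a b : S, (∃ y : S, b ≤ b * y * b) → a ≤ b * a →
        a ∈ dcl {w : S | ∃ s t : S, w = a * s * b * t * a}) ∧
      (∀ a b : S, (∃ y : S, b ≤ b * y * b) → a ≤ a * b →
        a ∈ dcl {w : S | ∃ s t : S, w = a * s * b * t * a}) ∧
      (∀ a b : S, (∃ y : S, b ≤ b * y * b) → a ≤ b →
        ∃ x : S, a ≤ a * x * a)) := by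
  constructor
  · rintro ⟨K, hK, nil, hsimp, hreg⟩
    have mulK : ∀ (s : S), ∀ x ∈ K, s * x ∈ K := fun s x hx => (hK.2.2.1 s trivial x hx).1
    have mulK' : ∀ (s : S), ∀ x ∈ K, x * s ∈ K := fun s x hx => (hK.2.2.1 s trivial x hx).2
    have dclK : ∀ (t : S), ∀ x ∈ K, t ≤ x → t ∈ K := fun t x hx h => hK.2.2.2 t trivial x hx h
    refine ⟨?_, ?_, ?_, ?_⟩
    · -- (i)
      intro a b
      obtain ⟨m, hm⟩ := nil a
      set A := ppow a m with hA
      obtain ⟨y, hyK, hAle⟩ := hreg A hm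
      have hcK : A * b * A ∈ K := mulK' A _ (mulK' b A hm)
      obtain ⟨u, hu, v, hv, hle⟩ := simple_div hK hsimp hreg hcK hm
      refine ⟨m, A * (y * u * A) * b * (A * v * y) * A, ⟨y * u * A, A * v * y, rfl⟩, ?_⟩
      calc A ≤ A * y * A := hAle
        _ ≤ A * y * (A * y * A) := mul_le_mul_right hAle _
        _ = (A * y) * A * (y * A) := by simp [mul_assoc]
        _ ≤ (A * y) * (u * (A * b * A) * v) * (y * A) := sandw _ _ hle
        _ = A * (y * u * A) * b * (A * v * y) * A := by simp [mul_assoc]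
    · -- (ii)
      rintro a b ⟨y, hb⟩ hba
      have hbK : b ∈ K := reg_mem hK nil hb
      have haK : a ∈ K := dclK a _ (mulK' a b hbK) hba
      obtain ⟨z, hzK, ha⟩ := hreg a haK
      refine ⟨a * z * b * (a * z) * a, ⟨z, a * z, rfl⟩, ?_⟩
      calc a ≤ a * z * a := ha
        _ ≤ a * z * (a * z * a) := mul_le_mul_right ha _
        _ = (a * z) * a * (z * a) := by simp [mul_assoc]
        _ ≤ (a * z) * (b * a) * (z * a) := sandw _ _ hba
        _ = a * z * b * (a * z) * a := by simp [mul_assoc]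
    · -- (iii)
      rintro a b ⟨y, hb⟩ hab
      have hbK : b ∈ K := reg_mem hK nil hb
      have haK : a ∈ K := dclK a _ (mulK a b hbK) hab
      obtain ⟨z, hzK, ha⟩ := hreg a haK
      refine ⟨a * (z * a) * b * z * a, ⟨z * a, z, rfl⟩, ?_⟩
      calc a ≤ a * z * a := ha
        _ ≤ a * z * (a * z * a) := mul_le_mul_right ha _
        _ = (a * z) * a * (z * a) := by simp [mul_assoc]
        _ ≤ (a * z) * (a * b) * (z * a) := sandw _ _ hab
        _ = a * (z * a) * b * z * a := by simp [mul_assoc]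
    · -- (iv)
      rintro a b ⟨y, hb⟩ hab
      have hbK : b ∈ K := reg_mem hK nil hb
      have haK : a ∈ K := dclK a b hbK hab
      obtain ⟨x, _, h⟩ := hreg a haK
      exact ⟨x, h⟩
  · rintro ⟨h1, h2, h3, h4⟩
    set K : Set S := {a : S | ∃ x : S, a ≤ a * x * a} with hKdef
    have hKS : ∀ b ∈ K, ∀ s : S, b * s ∈ K := by
      rintro b ⟨y, hb⟩ s
      have hc1 : b * y ≤ (b * y) * (b * y) := by
        calc b * y ≤ (b * y * b) * y := mul_le_mul_left hb y
          _ = (b * y) * (b * y) := by simp [mul_assoc]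
      have hcreg : ∃ w : S, b * y ≤ (b * y) * w * (b * y) := by
        refine ⟨b * y, ?_⟩
        calc b * y ≤ (b * y) * (b * y) := hc1
          _ ≤ (b * y) * ((b * y) * (b * y)) := mul_le_mul_right hc1 _
          _ = (b * y) * (b * y) * (b * y) := (mul_assoc _ _ _).symm
      have hba : b * s ≤ (b * y) * (b * s) := by
        calc b * s ≤ (b * y * b) * s := mul_le_mul_left hb s
          _ = (b * y) * (b * s) := by simp [mul_assoc]
      obtain ⟨w, ⟨s', t', rfl⟩, hle⟩ := h2 (b * s) (b * y) hcreg hba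
      exact ⟨s' * (b * y) * t', le_of_le_of_eq hle (by simp [mul_assoc])⟩
    have hSK : ∀ b ∈ K, ∀ s : S, s * b ∈ K := by
      rintro b ⟨y, hb⟩ s
      have hc1 : y * b ≤ (y * b) * (y * b) := by
        calc y * b ≤ y * (b * y * b) := mul_le_mul_right hb y
          _ = (y * b) * (y * b) := by simp [mul_assoc]
      have hcreg : ∃ w : S, y * b ≤ (y * b) * w * (y * b) := by
        refine ⟨y * b, ?_⟩
        calc y * b ≤ (y * b) * (y * b) := hc1
          _ ≤ (y * b) * ((y * b) * (y * b)) := mul_le_mul_right hc1 _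
          _ = (y * b) * (y * b) * (y * b) := (mul_assoc _ _ _).symm
      have hba : s * b ≤ (s * b) * (y * b) := by
        calc s * b ≤ s * (b * y * b) := mul_le_mul_right hb s
          _ = (s * b) * (y * b) := by simp [mul_assoc]
      obtain ⟨w, ⟨s', t', rfl⟩, hle⟩ := h3 (s * b) (y * b) hcreg hba
      exact ⟨s' * (y * b) * t', le_of_le_of_eq hle (by simp [mul_assoc])⟩
    have hKmem : ∀ a : S, ∃ m : ℕ, ppow a m ∈ K := by
      intro a
      obtain ⟨n, w, ⟨s, t, rfl⟩, hle⟩ := h1 a a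
      exact ⟨n, s * a * t, le_of_le_of_eq hle (by simp [mul_assoc])⟩
    have hdc : ∀ t x : S, x ∈ K → t ≤ x → t ∈ K := fun t x hx h => h4 t x hx h
    have hKreg : ∀ a ∈ K, ∃ x ∈ K, a ≤ a * x * a := by
      rintro a ⟨x, ha⟩
      refine ⟨x * a * x, ⟨a, ?_⟩, ?_⟩
      · calc x * a * x ≤ x * (a * x * a) * x := sandw x x ha
          _ = (x * a * x) * (a * x) := by simp [mul_assoc]
          _ ≤ (x * a * x) * ((a * x * a) * x) :=
              mul_le_mul_right (mul_le_mul_left ha x) _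
          _ = (x * a * x) * a * (x * a * x) := by simp [mul_assoc]
      · calc a ≤ a * x * a := ha
          _ ≤ a * x * (a * x * a) := mul_le_mul_right ha _
          _ = a * (x * a * x) * a := by simp [mul_assoc]
    refine ⟨K, ⟨?_, Set.subset_univ _, fun s _ x hx => ⟨hSK x hx s, hKS x hx s⟩,
      fun t _ x hx h => hdc t x hx h⟩, hKmem, ?_, fun a ha => hKreg a ha⟩
    · obtain ⟨m, hm⟩ := hKmem (Classical.arbitrary S)
      exact ⟨_, hm⟩
    · -- Simplicity
      intro L hL
      refine Set.Subset.antisymm hL.2.1 ?_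
      intro a ha
      obtain ⟨c, hcL⟩ := hL.1
      obtain ⟨x', hx'K, ha'⟩ := hKreg a ha
      have hxa : x' * a ∈ K := hSK a ha x'
      have hpow : ∀ m, ppow (x' * a) m ∈ K := by
        intro m
        induction m with
        | zero => exact hxa
        | succ m ih => exact hKS _ ih (x' * a)
      have hlem : ∀ m, a ≤ a * ppow (x' * a) m := by
        have h0 : a ≤ a * (x' * a) := le_of_le_of_eq ha' (mul_assoc _ _ _)
        intro m
        induction m with
        | zero => exact h0
        | succ m ih =>
          calc a ≤ a * (x' * a) := h0
            _ ≤ (a * ppow (x' * a) m) * (x' * a) := mul_le_mul_left ih _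
            _ = a * ppow (x' * a) (m + 1) := by simp [ppow, mul_assoc]
      obtain ⟨M, w, ⟨s, t, rfl⟩, hBle⟩ := h1 (x' * a) c
      set B := ppow (x' * a) M with hB
      have hLmul : ∀ k ∈ K, ∀ x ∈ L, k * x ∈ L ∧ x * k ∈ L := hL.2.2.1
      have hmemL : B * s * c * t * B ∈ L := by
        have e1 : (B * s) * c ∈ L := (hLmul _ (hKS B (hpow M) s) c hcL).1
        have e2 : ((B * s) * c) * (t * B) ∈ L := (hLmul _ (hSK B (hpow M) t) _ e1).2
        have heq : B * s * c * t * B = ((B * s) * c) * (t * B) := by simp [mul_assoc]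
        rwa [heq]
      have hBL : B ∈ L := hL.2.2.2 B (hpow M) _ hmemL hBle
      obtain ⟨wB, hwB⟩ := hpow M
      obtain ⟨w2, ⟨s2, t2, rfl⟩, hle2⟩ := h3 a B ⟨wB, hwB⟩ (hlem M)
      have hfin : a * s2 * B * t2 * a ∈ L := by
        have e1 : (a * s2) * B ∈ L := (hLmul _ (hKS a ha s2) B hBL).1
        have e2 : ((a * s2) * B) * (t2 * a) ∈ L := (hLmul _ (hSK a ha t2) _ e1).2
        have heq : a * s2 * B * t2 * a = ((a * s2) * B) * (t2 * a) := by simp [mul_assoc]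
        rwa [heq]
      exact hL.2.2.2 a ha _ hfin hle2
end

section
/- Let S be an ordered semigroup which is a nil extension of an ideal K. If b ∈ S is ordered regular (b ≤ bzb for some z ∈ S), then b ∈ K. -/
variable {S : Type*} [Semigroup S] [PartialOrder S]
  [CovariantClass S S (· * ·) (· ≤ ·)]
  [CovariantClass S S (Function.swap (· * ·)) (· ≤ ·)]

/-- If `S` is a nil extension of an ideal `K` and `b` is ordered regular, then
`b ∈ K`. -/
theorem regular_mem_kernel (K : Set S)
    (hK : IsIdealIn Set.univ K) (hnil : ∀ a : S, ∃ m : ℕ, ppow a m ∈ K)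
    (b z : S) (hb : b ≤ b * z * b) : b ∈ K := by
  have key : ∀ m : ℕ, b ≤ ppow (b * z) m * b := by
    intro m
    induction m with
    | zero => simpa [ppow, mul_assoc] using hb
    | succ n ih =>
      calc b ≤ ppow (b * z) n * b := ih
        _ ≤ ppow (b * z) n * (b * z * b) := mul_le_mul_right hb _
        _ = ppow (b * z) (n + 1) * b := by simp [ppow, mul_assoc]
  obtain ⟨m, hm⟩ := hnil (b * z)
  obtain ⟨_, _, hmul, hdown⟩ := hK
  exact hdown b (Set.mem_univ _) _ ((hmul b (Set.mem_univ _) _ hm).2) (key m)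
end

section
/- Let S be a π-regular ordered semigroup (each a ∈ S has a power a^m with a^m ≤ a^m x a^m for some x ∈ S). Suppose that for all a, b ∈ S and every ordered idempotent e (e ≤ e²), if e ≤ xay and e ≤ zbw for some x,y,z,w ∈ S¹ then e ≤ u(ab)v for some u,v ∈ S¹. Then every J-class of S containing an ordered idempotent is a subsemigroup of S. -/
variable {S : Type*} [Semigroup S] [PartialOrder S]
  [CovariantClass S S (· * ·) (· ≤ ·)]
  [CovariantClass S S (Function.swap (· * ·)) (· ≤ ·)]

/-- The principal ideal `I(a) = (a ∪ SaS ∪ Sa ∪ aS]` of `a`, as a set. -/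
def Iset (a : S) : Set S := {t | dvd1 a t}

lemma dvd1_refl (a : S) : dvd1 a a := Or.inl le_rfl

lemma dvd1_of_le {a b c : S} (h : dvd1 a b) (hcb : c ≤ b) : dvd1 a c := by
  rcases h with h | ⟨x, h⟩ | ⟨y, h⟩ | ⟨x, y, h⟩
  · exact Or.inl (hcb.trans h)
  · exact Or.inr (Or.inl ⟨x, hcb.trans h⟩)
  · exact Or.inr (Or.inr (Or.inl ⟨y, hcb.trans h⟩))
  · exact Or.inr (Or.inr (Or.inr ⟨x, y, hcb.trans h⟩))

lemma dvd1_mul_left {a b : S} (x : S) (h : dvd1 a b) : dvd1 a (x * b) := by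
  rcases h with h | ⟨x', h⟩ | ⟨y, h⟩ | ⟨x', y, h⟩
  · exact Or.inr (Or.inl ⟨x, mul_le_mul_right h x⟩)
  · exact Or.inr (Or.inl ⟨x * x', by
      rw [mul_assoc]; exact mul_le_mul_right h x⟩)
  · exact Or.inr (Or.inr (Or.inr ⟨x, y, by
      rw [mul_assoc]; exact mul_le_mul_right h x⟩))
  · exact Or.inr (Or.inr (Or.inr ⟨x * x', y, by
      simpa [mul_assoc] using mul_le_mul_right h x⟩))

lemma dvd1_mul_right {a b : S} (y : S) (h : dvd1 a b) : dvd1 a (b * y) := by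
  rcases h with h | ⟨x, h⟩ | ⟨y', h⟩ | ⟨x, y', h⟩
  · exact Or.inr (Or.inr (Or.inl ⟨y, mul_le_mul_left h y⟩))
  · exact Or.inr (Or.inr (Or.inr ⟨x, y, mul_le_mul_left h y⟩))
  · exact Or.inr (Or.inr (Or.inl ⟨y' * y, by
      rw [← mul_assoc]; exact mul_le_mul_left h y⟩))
  · exact Or.inr (Or.inr (Or.inr ⟨x, y' * y, by
      simpa [mul_assoc] using mul_le_mul_left h y⟩))

lemma dvd1_trans {a b c : S} (h1 : dvd1 a b) (h2 : dvd1 b c) : dvd1 a c := by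
  rcases h2 with h | ⟨x, h⟩ | ⟨y, h⟩ | ⟨x, y, h⟩
  · exact dvd1_of_le h1 h
  · exact dvd1_of_le (dvd1_mul_left x h1) h
  · exact dvd1_of_le (dvd1_mul_right y h1) h
  · exact dvd1_of_le (dvd1_mul_right y (dvd1_mul_left x h1)) h

/-- If `S` is `π`-regular and for every ordered idempotent `e`, `a ∣ e` and
`b ∣ e` imply `ab ∣ e`, then every `J`-class containing an ordered idempotent
is a subsemigroup. -/
theorem jclass_of_idempotent_subsemigroup
    (hpi : ∀ a : S, ∃ m : ℕ, ∃ x : S, ppow a m ≤ ppow a m * x * ppow a m)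
    (hcond : ∀ a b e : S, e ≤ e * e → dvd1 a e → dvd1 b e → dvd1 (a * b) e) :
    ∀ e : S, e ≤ e * e → ∀ a b : S,
      Iset a = Iset e → Iset b = Iset e → Iset (a * b) = Iset e := by
  intro e he a b ha hb
  have ha_e : dvd1 a e := by
    have : e ∈ Iset a := ha ▸ (dvd1_refl e : e ∈ Iset e)
    exact this
  have hb_e : dvd1 b e := by
    have : e ∈ Iset b := hb ▸ (dvd1_refl e : e ∈ Iset e)
    exact this
  have hab_e : dvd1 (a * b) e := hcond a b e he ha_e hb_e
  have he_a : dvd1 e a := by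
    have : a ∈ Iset e := ha ▸ (dvd1_refl a : a ∈ Iset a)
    exact this
  have he_ab : dvd1 e (a * b) := dvd1_mul_right b he_a
  ext t
  exact ⟨fun h => dvd1_trans he_ab h, fun h => dvd1_trans hab_e h⟩
end

section
/- Let S be an ordered semigroup which is a complete semilattice (with congruence ρ) of subsemigroups S_α, each a nil extension of a simple ordered regular semigroup K_α. Then every element a of S that is intra-regular (a ≤ xa²y for some x, y ∈ S¹) lies in the kernel K_α of its component S_α. -/
variable {S : Type*} [Semigroup S] [PartialOrder S]
  [CovariantClass S S (· * ·) (· ≤ ·)]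
  [CovariantClass S S (Function.swap (· * ·)) (· ≤ ·)]

section Aux

variable {S : Type*} [Semigroup S] [PartialOrder S]
  [CovariantClass S S (· * ·) (· ≤ ·)]
  [CovariantClass S S (Function.swap (· * ·)) (· ≤ ·)]

theorem ppow_succ' (s : S) (m : ℕ) : ppow s (m+1) = ppow s m * s := rfl

theorem ppow_mul_comm' (s : S) : ∀ m, s * ppow s m = ppow s m * s
  | 0 => rfl
  | m+1 => by
      show s * (ppow s m * s) = (ppow s m * s) * s
      rw [← mul_assoc, ppow_mul_comm' s m]

variable {ρ : S → S → Prop}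

theorem rho_congr (hρ : CompleteSemilatticeCongruence ρ) {p q r t : S}
    (h1 : ρ p q) (h2 : ρ r t) : ρ (p * r) (q * t) :=
  hρ.equiv.trans (hρ.mul_right _ _ r h1) (hρ.mul_left _ _ q h2)

theorem rho_ppow (hρ : CompleteSemilatticeCongruence ρ) (s : S) :
    ∀ m, ρ (ppow s m) s
  | 0 => hρ.equiv.refl s
  | m+1 => hρ.equiv.trans (hρ.mul_right _ _ s (rho_ppow hρ s m))
      (hρ.equiv.symm (hρ.sq s))

theorem rho_absorb_left (hρ : CompleteSemilatticeCongruence ρ) {a s t : S}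
    (h : ρ a (a * (s * t))) : ρ a (a * s) := by
  have h1 : ρ (a * s) ((a * (s * t)) * s) := hρ.mul_right _ _ s h
  rw [mul_assoc] at h1
  have h2 : ρ ((s * t) * s) (s * t) := by
    have c1 : ρ ((s * t) * s) (s * (s * t)) := hρ.comm _ _
    have c2 : ρ ((s * s) * t) (s * t) := hρ.mul_right _ _ t (hρ.equiv.symm (hρ.sq s))
    rw [mul_assoc] at c2
    exact hρ.equiv.trans c1 c2
  have h3 : ρ (a * ((s * t) * s)) (a * (s * t)) := hρ.mul_left _ _ a h2
  exact hρ.equiv.symm (hρ.equiv.trans (hρ.equiv.trans h1 h3) (hρ.equiv.symm h))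

theorem rho_absorb_right (hρ : CompleteSemilatticeCongruence ρ) {a s t : S}
    (h : ρ a (a * (s * t))) : ρ a (a * t) := by
  have h1 : ρ (a * t) ((a * (s * t)) * t) := hρ.mul_right _ _ t h
  rw [mul_assoc] at h1
  have h2 : ρ ((s * t) * t) (s * t) := by
    have c2 : ρ (s * (t * t)) (s * t) := hρ.mul_left _ _ s (hρ.equiv.symm (hρ.sq t))
    rw [← mul_assoc] at c2
    exact c2
  have h3 : ρ (a * ((s * t) * t)) (a * (s * t)) := hρ.mul_left _ _ a h2
  exact hρ.equiv.symm (hρ.equiv.trans (hρ.equiv.trans h1 h3) (hρ.equiv.symm h))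

theorem rho_join (hρ : CompleteSemilatticeCongruence ρ) {a s t : S}
    (hs : ρ a (a * s)) (ht : ρ a (a * t)) : ρ a (a * (s * t)) := by
  have h1 : ρ (a * t) ((a * s) * t) := hρ.mul_right _ _ t hs
  rw [mul_assoc] at h1
  exact hρ.equiv.trans ht h1

/-- If `k ∈ K_a` and `s*k` is in the component of `a`, then `s*k ∈ K_a`. -/
theorem memK_left (hρ : CompleteSemilatticeCongruence ρ) {Kk : S → Set S}
    (hnil : ∀ a : S, IsNilExtOf (cls ρ a) (Kk a))
    (hreg : ∀ a : S, OrdRegularIn (Kk a))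
    {a k : S} (s : S) (hk : k ∈ Kk a) (h : ρ (s * k) a) : s * k ∈ Kk a := by
  obtain ⟨⟨hne, hsub, habs, hdown⟩, -⟩ := hnil a
  obtain ⟨w, hw, hkw⟩ := hreg a k hk
  have hwk : w * k ∈ Kk a := (habs k (hsub hk) w hw).2
  have hmem : (s * k) * (w * k) ∈ Kk a := (habs (s * k) h (w * k) hwk).1
  have hle : s * k ≤ (s * k) * (w * k) := by
    have h' := mul_le_mul_right hkw s
    rwa [show s * (k * w * k) = (s * k) * (w * k) by simp only [mul_assoc]] at h'
  exact hdown (s * k) h _ hmem hle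

/-- If `k ∈ K_a` and `k*s` is in the component of `a`, then `k*s ∈ K_a`. -/
theorem memK_right (hρ : CompleteSemilatticeCongruence ρ) {Kk : S → Set S}
    (hnil : ∀ a : S, IsNilExtOf (cls ρ a) (Kk a))
    (hreg : ∀ a : S, OrdRegularIn (Kk a))
    {a k : S} (s : S) (hk : k ∈ Kk a) (h : ρ (k * s) a) : k * s ∈ Kk a := by
  obtain ⟨⟨hne, hsub, habs, hdown⟩, -⟩ := hnil a
  obtain ⟨w, hw, hkw⟩ := hreg a k hk
  have hkw' : k * w ∈ Kk a := (habs k (hsub hk) w hw).1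
  have hmem : (k * w) * (k * s) ∈ Kk a := (habs (k * s) h (k * w) hkw').2
  have hle : k * s ≤ (k * w) * (k * s) := by
    have h' := mul_le_mul_left hkw s
    rwa [show (k * w * k) * s = (k * w) * (k * s) by simp only [mul_assoc]] at h'
  exact hdown (k * s) h _ hmem hle

end Aux

/-- If `S` is a complete semilattice (congruence `ρ`) of subsemigroups `S_α`,
each a nil extension of a simple ordered regular kernel `K_α`, then every
intra-regular element `a` lies in the kernel of its own component. -/
theorem intra_regular_mem_kernel (ρ : S → S → Prop)
    (hρ : CompleteSemilatticeCongruence ρ) (Kk : S → Set S)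
    (hKcong : ∀ a b : S, ρ a b → Kk a = Kk b)
    (hnil : ∀ a : S, IsNilExtOf (cls ρ a) (Kk a))
    (hsim : ∀ a : S, SimpleIn (Kk a)) (hreg : ∀ a : S, OrdRegularIn (Kk a)) :
    ∀ a : S, IntraReg a → a ∈ Kk a := by
  intro a ha
  obtain ⟨⟨hne, hsub, habs, hdown⟩, hnilpow⟩ := hnil a
  have Ha : ρ a (a * a) := hρ.sq a
  rcases ha with h1 | ⟨x, h2⟩ | ⟨y, h3⟩ | ⟨x, y, h4⟩
  · -- a ≤ a * a
    have hpow : ∀ m, a ≤ ppow a m := by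
      intro m
      induction m with
      | zero => exact le_refl a
      | succ m ih =>
        calc a ≤ a * a := h1
          _ ≤ ppow a m * a := mul_le_mul_left ih a
    obtain ⟨m, hm⟩ := hnilpow a (hρ.equiv.refl a)
    exact hdown a (hρ.equiv.refl a) _ hm (hpow m)
  · -- a ≤ x * (a * a)
    have hb : ρ a (a * (x * (a * a))) := hρ.complete _ _ h2
    have Hx : ρ a (a * x) := rho_absorb_left hρ hb
    have Hxa2 : ρ (x * (a * a)) a := by
      have c1 : ρ (x * (a * a)) ((a * a) * x) := hρ.comm _ _
      have c2 : ρ ((a * a) * x) (a * x) := hρ.mul_right _ _ x (hρ.equiv.symm Ha)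
      exact hρ.equiv.trans (hρ.equiv.trans c1 c2) (hρ.equiv.symm Hx)
    have He : ρ ((x * (a * a)) * x) a := by
      have c1 : ρ ((x * (a * a)) * x) (a * x) := hρ.mul_right _ _ x Hxa2
      exact hρ.equiv.trans c1 (hρ.equiv.symm Hx)
    have hBB : a * a ≤ ((x * (a * a)) * x) * (a * a) := by
      have h' : a * a ≤ (x * (a * a)) * (x * (a * a)) := mul_le_mul' h2 h2
      rwa [show (x * (a * a)) * (x * (a * a)) = ((x * (a * a)) * x) * (a * a) by
        simp only [mul_assoc]] at h'
    have hchain : ∀ m, a * a ≤ ppow ((x * (a * a)) * x) m * (a * a) := by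
      intro m
      induction m with
      | zero => exact hBB
      | succ m ih =>
        calc a * a ≤ ppow ((x * (a * a)) * x) m * (a * a) := ih
          _ ≤ ppow ((x * (a * a)) * x) m * (((x * (a * a)) * x) * (a * a)) :=
              mul_le_mul_right hBB _
          _ = ppow ((x * (a * a)) * x) (m + 1) * (a * a) :=
              (mul_assoc _ _ _).symm
    obtain ⟨m, hm⟩ := hnilpow ((x * (a * a)) * x) He
    have Hu : ρ (ppow ((x * (a * a)) * x) m * (a * a)) a := by
      have c1 : ρ (ppow ((x * (a * a)) * x) m * (a * a)) (a * (a * a)) :=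
        hρ.mul_right _ _ _ (hsub hm)
      exact hρ.equiv.trans c1 (hρ.equiv.symm (rho_join hρ Ha Ha))
    have hu : ppow ((x * (a * a)) * x) m * (a * a) ∈ Kk a :=
      memK_right hρ hnil hreg (a * a) hm Hu
    have ha2 : a * a ∈ Kk a := hdown (a * a) (hρ.equiv.symm Ha) _ hu (hchain m)
    have hxK : x * (a * a) ∈ Kk a := memK_left hρ hnil hreg x ha2 Hxa2
    exact hdown a (hρ.equiv.refl a) _ hxK h2
  · -- a ≤ (a * a) * y
    have hb : ρ a (a * ((a * a) * y)) := hρ.complete _ _ h3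
    have Hy : ρ a (a * y) := rho_absorb_right hρ hb
    have Hw1 : ρ ((a * a) * y) a := by
      have c1 : ρ ((a * a) * y) (a * y) := hρ.mul_right _ _ y (hρ.equiv.symm Ha)
      exact hρ.equiv.trans c1 (hρ.equiv.symm Hy)
    have He : ρ (y * ((a * a) * y)) a := by
      have c1 : ρ (y * ((a * a) * y)) (y * a) := hρ.mul_left _ _ y Hw1
      have c2 : ρ (y * a) (a * y) := hρ.comm _ _
      exact hρ.equiv.trans (hρ.equiv.trans c1 c2) (hρ.equiv.symm Hy)
    have hBB : a * a ≤ (a * a) * (y * ((a * a) * y)) := by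
      have h' : a * a ≤ ((a * a) * y) * ((a * a) * y) := mul_le_mul' h3 h3
      rwa [show ((a * a) * y) * ((a * a) * y) = (a * a) * (y * ((a * a) * y)) by
        simp only [mul_assoc]] at h'
    have hchain : ∀ m, a * a ≤ (a * a) * ppow (y * ((a * a) * y)) m := by
      intro m
      induction m with
      | zero => exact hBB
      | succ m ih =>
        calc a * a ≤ (a * a) * ppow (y * ((a * a) * y)) m := ih
          _ ≤ ((a * a) * (y * ((a * a) * y))) * ppow (y * ((a * a) * y)) m :=
              mul_le_mul_left hBB _
          _ = (a * a) * ppow (y * ((a * a) * y)) (m + 1) := by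
              rw [mul_assoc, ppow_mul_comm' (y * ((a * a) * y)) m]; rfl
    obtain ⟨m, hm⟩ := hnilpow (y * ((a * a) * y)) He
    have Hu : ρ ((a * a) * ppow (y * ((a * a) * y)) m) a := by
      have c1 : ρ ((a * a) * ppow (y * ((a * a) * y)) m) ((a * a) * a) :=
        hρ.mul_left _ _ _ (hsub hm)
      have c2 : ρ ((a * a) * a) (a * a) := hρ.mul_right _ _ a (hρ.equiv.symm Ha)
      exact hρ.equiv.trans (hρ.equiv.trans c1 c2) (hρ.equiv.symm Ha)
    have hu : (a * a) * ppow (y * ((a * a) * y)) m ∈ Kk a :=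
      memK_left hρ hnil hreg (a * a) hm Hu
    have ha2 : a * a ∈ Kk a := hdown (a * a) (hρ.equiv.symm Ha) _ hu (hchain m)
    have hkK : (a * a) * y ∈ Kk a := memK_right hρ hnil hreg y ha2 Hw1
    exact hdown a (hρ.equiv.refl a) _ hkK h3
  · -- a ≤ (x * (a * a)) * y
    have hb : ρ a (a * ((x * (a * a)) * y)) := hρ.complete _ _ h4
    have Hxa2' : ρ a (a * (x * (a * a))) := rho_absorb_left hρ hb
    have Hy : ρ a (a * y) := rho_absorb_right hρ hb
    have Hx : ρ a (a * x) := rho_absorb_left hρ Hxa2'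
    have Hxa2 : ρ (x * (a * a)) a := by
      have c1 : ρ (x * (a * a)) ((a * a) * x) := hρ.comm _ _
      have c2 : ρ ((a * a) * x) (a * x) := hρ.mul_right _ _ x (hρ.equiv.symm Ha)
      exact hρ.equiv.trans (hρ.equiv.trans c1 c2) (hρ.equiv.symm Hx)
    have HB : ρ ((x * (a * a)) * y) a := by
      have c1 : ρ ((x * (a * a)) * y) (a * y) := hρ.mul_right _ _ y Hxa2
      exact hρ.equiv.trans c1 (hρ.equiv.symm Hy)
    have He : ρ (((x * (a * a)) * y) * x) a := by
      have c1 : ρ (((x * (a * a)) * y) * x) (a * x) := hρ.mul_right _ _ x HB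
      exact hρ.equiv.trans c1 (hρ.equiv.symm Hx)
    have hBB : a * a ≤ (((x * (a * a)) * y) * x) * ((a * a) * y) := by
      have h' : a * a ≤ ((x * (a * a)) * y) * ((x * (a * a)) * y) := mul_le_mul' h4 h4
      rwa [show ((x * (a * a)) * y) * ((x * (a * a)) * y)
          = (((x * (a * a)) * y) * x) * ((a * a) * y) by simp only [mul_assoc]] at h'
    have hchain : ∀ m, a * a ≤
        ppow (((x * (a * a)) * y) * x) m * ((a * a) * ppow y m) := by
      intro m
      induction m with
      | zero => exact hBB
      | succ m ih =>
        calc a * a ≤ ppow (((x * (a * a)) * y) * x) m * ((a * a) * ppow y m) := ih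
          _ ≤ ppow (((x * (a * a)) * y) * x) m *
              (((((x * (a * a)) * y) * x) * ((a * a) * y)) * ppow y m) :=
                mul_le_mul_right (mul_le_mul_left hBB _) _
          _ = ppow (((x * (a * a)) * y) * x) (m + 1) * ((a * a) * ppow y (m + 1)) := by
              rw [ppow_succ' (((x * (a * a)) * y) * x) m, ppow_succ' y m,
                ← ppow_mul_comm' y m]
              simp only [mul_assoc]
    obtain ⟨m, hm⟩ := hnilpow (((x * (a * a)) * y) * x) He
    have Hu : ρ (ppow (((x * (a * a)) * y) * x) m * ((a * a) * ppow y m)) a := by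
      have c1 : ρ ((a * a) * ppow y m) ((a * a) * y) :=
        hρ.mul_left _ _ _ (rho_ppow hρ y m)
      have c2 : ρ (ppow (((x * (a * a)) * y) * x) m * ((a * a) * ppow y m))
          (a * ((a * a) * y)) := rho_congr hρ (hsub hm) c1
      exact hρ.equiv.trans c2 (hρ.equiv.symm (rho_join hρ (rho_join hρ Ha Ha) Hy))
    have hu : ppow (((x * (a * a)) * y) * x) m * ((a * a) * ppow y m) ∈ Kk a :=
      memK_right hρ hnil hreg ((a * a) * ppow y m) hm Hu
    have ha2 : a * a ∈ Kk a := hdown (a * a) (hρ.equiv.symm Ha) _ hu (hchain m)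
    have Hw1 : ρ ((a * a) * y) a := by
      have c1 : ρ ((a * a) * y) (a * y) := hρ.mul_right _ _ y (hρ.equiv.symm Ha)
      exact hρ.equiv.trans c1 (hρ.equiv.symm Hy)
    have hw1 : (a * a) * y ∈ Kk a := memK_right hρ hnil hreg y ha2 Hw1
    have Hv : ρ (x * ((a * a) * y)) a := by
      have c1 : ρ (x * ((a * a) * y)) (x * a) := hρ.mul_left _ _ x Hw1
      have c2 : ρ (x * a) (a * x) := hρ.comm _ _
      exact hρ.equiv.trans (hρ.equiv.trans c1 c2) (hρ.equiv.symm Hx)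
    have hv : x * ((a * a) * y) ∈ Kk a := memK_left hρ hnil hreg x hw1 Hv
    have h4' : a ≤ x * ((a * a) * y) := by rwa [← mul_assoc]
    exact hdown a (hρ.equiv.refl a) _ hv h4'
end

section
/- Let S be an ordered semigroup which is a complete semilattice of subsemigroups S_α, each a nil extension of a simple ordered regular semigroup K_α. Then each S_α is Archimedean: for all a, b ∈ S_α, if b ≤ xay for some x, y ∈ S¹, then there exist m ∈ ℕ and z₁, z₂ ∈ S_α with b^m ≤ z₁ a^n z₂ for some n ∈ ℕ. Moreover S is π-regular. -/
variable {S : Type*} [Semigroup S] [PartialOrder S]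
  [CovariantClass S S (· * ·) (· ≤ ·)]
  [CovariantClass S S (Function.swap (· * ·)) (· ≤ ·)]

/-- If `S` is a complete semilattice of subsemigroups, each a nil extension of
a simple ordered regular semigroup, then each component is Archimedean and `S`
is `π`-regular. -/
theorem semilattice_nilext_archimedean_and_pi_regular (ρ : S → S → Prop)
    (hρ : CompleteSemilatticeCongruence ρ)
    (hdec : ∀ a : S, ∃ K : Set S,
      IsNilExtOf (cls ρ a) K ∧ SimpleIn K ∧ OrdRegularIn K) :
    (∀ a b : S, ρ a b → dvd1 a b → ∃ m n : ℕ, ∃ z₁ z₂ : S,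
      ρ z₁ a ∧ ρ z₂ a ∧ ppow b m ≤ z₁ * ppow a n * z₂) ∧
    (∀ a : S, ∃ m : ℕ, ∃ x : S, ppow a m ≤ ppow a m * x * ppow a m) := by
  constructor
  · intro a b hab _
    obtain ⟨K, ⟨⟨hKne, hKsub, hKmul, hKdown⟩, hnil⟩, hsimple, _⟩ := hdec a
    obtain ⟨n, hn⟩ := hnil a (hρ.equiv.refl a)
    obtain ⟨m, hm⟩ := hnil b (hρ.equiv.symm hab)
    have hclosed : ∀ s ∈ K, ∀ t ∈ K, s * t ∈ K := fun s hs t ht =>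
      (hKmul s (hKsub hs) t ht).1
    set u := ppow a n with hu
    set J : Set S := {t | t ∈ K ∧ ∃ s₁ ∈ K, ∃ s₂ ∈ K, t ≤ s₁ * u * s₂} with hJdef
    have hJ : IsIdealIn K J := by
      refine ⟨⟨u * u * u, ⟨hclosed _ (hclosed _ hn _ hn) _ hn, u, hn, u, hn, le_refl _⟩⟩,
        fun t ht => ht.1, ?_, ?_⟩
      · rintro s hs t ⟨htK, s₁, hs₁, s₂, hs₂, hle⟩
        constructor
        · refine ⟨hclosed s hs t htK, s * s₁, hclosed s hs s₁ hs₁, s₂, hs₂, ?_⟩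
          calc s * t ≤ s * (s₁ * u * s₂) := mul_le_mul_right hle s
            _ = s * s₁ * u * s₂ := by simp [mul_assoc]
        · refine ⟨hclosed t htK s hs, s₁, hs₁, s₂ * s, hclosed s₂ hs₂ s hs, ?_⟩
          calc t * s ≤ s₁ * u * s₂ * s := mul_le_mul_left hle s
            _ = s₁ * u * (s₂ * s) := by rw [mul_assoc]
      · rintro t htK x ⟨hxK, s₁, hs₁, s₂, hs₂, hle⟩ hts
        exact ⟨htK, s₁, hs₁, s₂, hs₂, hts.trans hle⟩
    have hJK := hsimple J hJ
    have hbm : ppow b m ∈ J := hJK ▸ hm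
    obtain ⟨_, s₁, hs₁, s₂, hs₂, hle⟩ := hbm
    exact ⟨m, n, s₁, s₂, hKsub hs₁, hKsub hs₂, hle⟩
  · intro a
    obtain ⟨K, ⟨⟨hKne, hKsub, hKmul, hKdown⟩, hnil⟩, _, hreg⟩ := hdec a
    obtain ⟨m, hm⟩ := hnil a (hρ.equiv.refl a)
    obtain ⟨x, hx, hle⟩ := hreg _ hm
    exact ⟨m, x, hle⟩
end

section
/- Let S be an ordered semigroup which is a complete semilattice of subsemigroups S_α, each a nil extension of a simple ordered regular semigroup K_α. Then the set of intra-regular elements of S equals the set of ordered regular elements of S: {a : a ≤ xa²y for some x,y ∈ S¹} = {a : a ≤ axa for some x ∈ S}. -/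
set_option linter.unusedSectionVars false


variable {S : Type*} [Semigroup S] [PartialOrder S]
  [CovariantClass S S (· * ·) (· ≤ ·)]
  [CovariantClass S S (Function.swap (· * ·)) (· ≤ ·)]

variable {ρ : S → S → Prop}

lemma abs_of_cls (hρ : CompleteSemilatticeCongruence ρ) {a c : S} (h : ρ c a) : ρ a (a * c) :=
  hρ.equiv.trans (hρ.sq a) (hρ.equiv.symm (hρ.mul_left c a a h))

lemma mul_mem_right (hρ : CompleteSemilatticeCongruence ρ) {a b x : S} (hb : ρ b a) (hx : ρ a (a * x)) : ρ (b * x) a :=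
  hρ.equiv.trans (hρ.mul_right b a x hb) (hρ.equiv.symm hx)

lemma mul_mem_left (hρ : CompleteSemilatticeCongruence ρ) {a b x : S} (hb : ρ b a) (hx : ρ a (a * x)) : ρ (x * b) a :=
  hρ.equiv.trans (hρ.mul_left b a x hb)
    (hρ.equiv.trans (hρ.comm x a) (hρ.equiv.symm hx))

lemma mul_cls (hρ : CompleteSemilatticeCongruence ρ) {a b c : S} (hb : ρ b a) (hc : ρ c a) : ρ (b * c) a :=
  mul_mem_right hρ hb (abs_of_cls hρ hc)

lemma ppow_cls (hρ : CompleteSemilatticeCongruence ρ) {a u : S} (hu : ρ u a) : ∀ n, ρ (ppow u n) a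
  | 0 => hu
  | n + 1 => mul_cls hρ (ppow_cls hρ hu n) hu

lemma abs_split_left (hρ : CompleteSemilatticeCongruence ρ) {a x y : S} (h : ρ a (a * (x * y))) : ρ a (a * x) := by
  have h1 : ρ (a * x) (a * (x * y) * x) := hρ.mul_right a _ x h
  have h2 : ρ (a * (x * y) * x) (a * (x * (x * y))) := by
    rw [mul_assoc]
    exact hρ.mul_left _ _ a (hρ.comm (x * y) x)
  have h3 : ρ (a * (x * (x * y))) (a * (x * y)) := by
    rw [← mul_assoc x x y]
    exact hρ.mul_left _ _ a (hρ.mul_right _ _ y (hρ.equiv.symm (hρ.sq x)))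
  exact hρ.equiv.symm (hρ.equiv.trans h1 (hρ.equiv.trans h2
    (hρ.equiv.trans h3 (hρ.equiv.symm h))))

lemma abs_split_right (hρ : CompleteSemilatticeCongruence ρ) {a x y : S} (h : ρ a (a * (x * y))) : ρ a (a * y) := by
  have h1 : ρ (a * y) (a * (x * y) * y) := hρ.mul_right a _ y h
  have h2 : ρ (a * (x * y) * y) (a * (x * y)) := by
    rw [mul_assoc, mul_assoc]
    exact hρ.mul_left _ _ a (hρ.mul_left _ _ x (hρ.equiv.symm (hρ.sq y)))
  exact hρ.equiv.symm (hρ.equiv.trans h1 (hρ.equiv.trans h2 (hρ.equiv.symm h)))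

lemma ppow_mul_comm_aux (u : S) (n : ℕ) : ppow u n * u = u * ppow u n := by
  induction n with
  | zero => rfl
  | succ n ih =>
    show (ppow u n * u) * u = u * (ppow u n * u)
    rw [ih, mul_assoc, ih]

lemma mem_of_le_mul_right {T K : Set S} (hI : IsIdealIn T K)
    (hnil : ∀ b ∈ T, ∃ m, ppow b m ∈ K) {a r : S} (ha : a ∈ T) (hr : r ∈ T)
    (h : a ≤ a * r) : a ∈ K := by
  have key : ∀ n, a ≤ a * ppow r n := by
    intro n
    induction n with
    | zero => exact h
    | succ n ih =>
      calc a ≤ a * r := h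
        _ ≤ a * ppow r n * r := mul_le_mul_left ih r
        _ = a * ppow r (n + 1) := mul_assoc a (ppow r n) r
  obtain ⟨m, hm⟩ := hnil r hr
  exact hI.2.2.2 a ha _ (hI.2.2.1 a ha _ hm).1 (key m)

lemma mem_of_le_mul_left {T K : Set S} (hI : IsIdealIn T K)
    (hnil : ∀ b ∈ T, ∃ m, ppow b m ∈ K) {a q : S} (ha : a ∈ T) (hq : q ∈ T)
    (h : a ≤ q * a) : a ∈ K := by
  have key : ∀ n, a ≤ ppow q n * a := by
    intro n
    induction n with
    | zero => exact h
    | succ n ih =>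
      calc a ≤ ppow q n * a := ih
        _ ≤ ppow q n * (q * a) := mul_le_mul_right h _
        _ = ppow q (n + 1) * a := (mul_assoc _ q a).symm
  obtain ⟨m, hm⟩ := hnil q hq
  exact hI.2.2.2 a ha _ (hI.2.2.1 a ha _ hm).2 (key m)

lemma mem_of_le_mul_both {T K : Set S} (hI : IsIdealIn T K)
    (hnil : ∀ b ∈ T, ∃ m, ppow b m ∈ K) {a u v : S} (ha : a ∈ T) (hu : u ∈ T)
    (hv : ∀ n, ppow v n ∈ T) (h : a ≤ u * (a * v)) : a ∈ K := by
  have key : ∀ n, a ≤ ppow u n * (a * ppow v n) := by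
    intro n
    induction n with
    | zero => exact h
    | succ n ih =>
      calc a ≤ u * (a * v) := h
        _ ≤ u * ((ppow u n * (a * ppow v n)) * v) :=
            mul_le_mul_right (mul_le_mul_left ih v) u
        _ = ppow u (n + 1) * (a * ppow v (n + 1)) := by
            show u * ((ppow u n * (a * ppow v n)) * v)
              = (ppow u n * u) * (a * (ppow v n * v))
            rw [ppow_mul_comm_aux u n]
            simp [mul_assoc]
  obtain ⟨m, hm⟩ := hnil u hu
  have h1 : ppow u m * a ∈ K := (hI.2.2.1 a ha _ hm).2
  have h2 : (ppow u m * a) * ppow v m ∈ K := (hI.2.2.1 _ (hv m) _ h1).2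
  have h3 : a ≤ (ppow u m * a) * ppow v m := by
    rw [mul_assoc]; exact key m
  exact hI.2.2.2 a ha _ h2 h3

lemma intra_of_mem_K {T K : Set S} (hI : IsIdealIn T K) (hs : SimpleIn K)
    {a : S} (ha : a ∈ K) : IntraReg a := by
  have hKmul : ∀ s ∈ K, ∀ t ∈ K, s * t ∈ K :=
    fun s hs' t ht => (hI.2.2.1 s (hI.2.1 hs') t ht).1
  have haa : a * a ∈ K := hKmul a ha a ha
  set J : Set S := {t | t ∈ K ∧ (t ≤ a * a ∨ (∃ s ∈ K, t ≤ s * (a * a)) ∨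
    (∃ s ∈ K, t ≤ a * a * s) ∨ ∃ s ∈ K, ∃ r ∈ K, t ≤ s * (a * a) * r)} with hJdef
  have hJideal : IsIdealIn K J := by
    refine ⟨⟨a * a, haa, Or.inl le_rfl⟩, fun t ht => ht.1, ?_, ?_⟩
    · intro s hsK t ht
      obtain ⟨htK, hc⟩ := ht
      constructor
      · refine ⟨hKmul s hsK t htK, ?_⟩
        rcases hc with h | ⟨s', hs', h⟩ | ⟨s', hs', h⟩ | ⟨s', hs', r', hr', h⟩
        · exact Or.inr (Or.inl ⟨s, hsK, mul_le_mul_right h s⟩)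
        · refine Or.inr (Or.inl ⟨s * s', hKmul s hsK s' hs', ?_⟩)
          calc s * t ≤ s * (s' * (a * a)) := mul_le_mul_right h s
            _ = (s * s') * (a * a) := (mul_assoc ..).symm
        · refine Or.inr (Or.inr (Or.inr ⟨s, hsK, s', hs', ?_⟩))
          calc s * t ≤ s * (a * a * s') := mul_le_mul_right h s
            _ = s * (a * a) * s' := by simp [mul_assoc]
        · refine Or.inr (Or.inr (Or.inr ⟨s * s', hKmul s hsK s' hs', r', hr', ?_⟩))
          calc s * t ≤ s * (s' * (a * a) * r') := mul_le_mul_right h s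
            _ = (s * s') * (a * a) * r' := by simp [mul_assoc]
      · refine ⟨hKmul t htK s hsK, ?_⟩
        rcases hc with h | ⟨s', hs', h⟩ | ⟨s', hs', h⟩ | ⟨s', hs', r', hr', h⟩
        · exact Or.inr (Or.inr (Or.inl ⟨s, hsK, mul_le_mul_left h s⟩))
        · exact Or.inr (Or.inr (Or.inr ⟨s', hs', s, hsK, mul_le_mul_left h s⟩))
        · refine Or.inr (Or.inr (Or.inl ⟨s' * s, hKmul s' hs' s hsK, ?_⟩))
          calc t * s ≤ (a * a * s') * s := mul_le_mul_left h s
            _ = a * a * (s' * s) := by simp [mul_assoc]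
        · refine Or.inr (Or.inr (Or.inr ⟨s', hs', r' * s, hKmul r' hr' s hsK, ?_⟩))
          calc t * s ≤ (s' * (a * a) * r') * s := mul_le_mul_left h s
            _ = s' * (a * a) * (r' * s) := by simp [mul_assoc]
    · intro t htK x hx hle
      refine ⟨htK, ?_⟩
      rcases hx.2 with h | ⟨s', hs', h⟩ | ⟨s', hs', h⟩ | ⟨s', hs', r', hr', h⟩
      · exact Or.inl (hle.trans h)
      · exact Or.inr (Or.inl ⟨s', hs', hle.trans h⟩)
      · exact Or.inr (Or.inr (Or.inl ⟨s', hs', hle.trans h⟩))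
      · exact Or.inr (Or.inr (Or.inr ⟨s', hs', r', hr', hle.trans h⟩))
  have hJK : J = K := hs J hJideal
  have haJ : a ∈ J := by rw [hJK]; exact ha
  rcases haJ.2 with h | ⟨s, -, h⟩ | ⟨s, -, h⟩ | ⟨s, -, r, -, h⟩
  · exact Or.inl h
  · exact Or.inr (Or.inl ⟨s, h⟩)
  · exact Or.inr (Or.inr (Or.inl ⟨s, h⟩))
  · exact Or.inr (Or.inr (Or.inr ⟨s, r, h⟩))


/-- If `S` is a complete semilattice of subsemigroups, each a nil extension of
a simple ordered regular semigroup, then the intra-regular elements of `S` are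
exactly the ordered regular elements. -/
theorem intra_eq_regular (ρ : S → S → Prop)
    (hρ : CompleteSemilatticeCongruence ρ)
    (hdec : ∀ a : S, ∃ K : Set S,
      IsNilExtOf (cls ρ a) K ∧ SimpleIn K ∧ OrdRegularIn K) :
    {a : S | IntraReg a} = {a : S | ∃ x : S, a ≤ a * x * a} := by
  ext a
  simp only [Set.mem_setOf_eq]
  obtain ⟨K, ⟨hI, hnil⟩, hsimp, hreg⟩ := hdec a
  have haT : a ∈ cls ρ a := hρ.equiv.refl a
  constructor
  · intro hintra
    have haK : a ∈ K := by
      rcases hintra with h | ⟨x, h⟩ | ⟨y, h⟩ | ⟨x, y, h⟩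
      · exact mem_of_le_mul_right hI hnil haT haT h
      · have hc := hρ.complete a _ h
        have habsx : ρ a (a * x) := abs_split_left hρ hc
        have hq : ρ (x * a) a := mul_mem_left hρ (hρ.equiv.refl a) habsx
        refine mem_of_le_mul_left hI hnil haT hq ?_
        rw [← mul_assoc] at h; exact h
      · have hc := hρ.complete a _ h
        have habsy : ρ a (a * y) := abs_split_right hρ hc
        have hr : ρ (a * y) a := mul_mem_right hρ (hρ.equiv.refl a) habsy
        refine mem_of_le_mul_right hI hnil haT hr ?_
        rw [mul_assoc] at h; exact h
      · have hc := hρ.complete a _ h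
        have habsy : ρ a (a * y) := abs_split_right hρ hc
        have habsx : ρ a (a * x) := abs_split_left hρ (abs_split_left hρ hc)
        have hxa : ρ (x * a) a := mul_mem_left hρ (hρ.equiv.refl a) habsx
        have hu : ρ (x * (x * a)) a := mul_mem_left hρ hxa habsx
        have hya : ρ (y * a) a := mul_mem_left hρ (hρ.equiv.refl a) habsy
        have hv : ρ ((y * a) * y) a := mul_mem_right hρ hya habsy
        have hvpow : ∀ n, ppow ((y * a) * y) n ∈ cls ρ a :=
          fun n => ppow_cls hρ hv n
        have hkey : a ≤ (x * (x * a)) * (a * ((y * a) * y)) := by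
          calc a ≤ x * (a * a) * y := h
            _ = (x * a) * (a * y) := by simp [mul_assoc]
            _ ≤ (x * (x * (a * a) * y)) * (a * y) :=
                mul_le_mul_left (mul_le_mul_right h x) (a * y)
            _ = (x * (x * a)) * (a * ((y * a) * y)) := by simp [mul_assoc]
        exact mem_of_le_mul_both hI hnil haT hu hvpow hkey
    obtain ⟨x, -, hle⟩ := hreg a haK
    exact ⟨x, hle⟩
  · rintro ⟨x, h⟩
    have hc := hρ.complete a _ h
    have habsx : ρ a (a * x) := abs_split_right hρ (abs_split_left hρ hc)
    have hxa : ρ (x * a) a := mul_mem_left hρ (hρ.equiv.refl a) habsx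
    have haK : a ∈ K := by
      refine mem_of_le_mul_right hI hnil haT hxa ?_
      rw [mul_assoc] at h; exact h
    exact intra_of_mem_K hI hsimp haK
end

section
/- Let S be an ordered semigroup which is a complete semilattice of subsemigroups S_α, each a nil extension of a left simple right regular ordered semigroup K_α. Then each K_α is ordered regular, hence each K_α is a left group like ordered semigroup (left simple and ordered regular). -/
variable {S : Type*} [Semigroup S] [PartialOrder S]
  [CovariantClass S S (· * ·) (· ≤ ·)]
  [CovariantClass S S (Function.swap (· * ·)) (· ≤ ·)]

/-- If `S` is a complete semilattice of subsemigroups `S_α`, each a nil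
extension of a left simple and right regular kernel `K_α`, then every `K_α`
is ordered regular, hence left group like (left simple and ordered regular). -/
theorem kernels_are_left_group_like (ρ : S → S → Prop)
    (hρ : CompleteSemilatticeCongruence ρ) (Kk : S → Set S)
    (hKcong : ∀ a b : S, ρ a b → Kk a = Kk b)
    (hnil : ∀ a : S, IsNilExtOf (cls ρ a) (Kk a))
    (hls : ∀ a : S, LeftSimpleIn (Kk a)) (hrr : ∀ a : S, RightRegularIn (Kk a)) :
    ∀ a : S, OrdRegularIn (Kk a) ∧ LeftSimpleIn (Kk a) := by
  intro a0
  refine ⟨?_, hls a0⟩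
  obtain ⟨hne, hsub, hclosed, hdown⟩ := (hnil a0).1
  have Kmul : ∀ s ∈ Kk a0, ∀ t ∈ Kk a0, s * t ∈ Kk a0 :=
    fun s hs t ht => (hclosed s (hsub hs) t ht).1
  have key : ∀ b ∈ Kk a0, ∀ c ∈ Kk a0, ∃ k ∈ Kk a0, c ≤ k * b := by
    intro b hb c hc
    have hL : IsLeftIdealIn (Kk a0) {t | t ∈ Kk a0 ∧ ∃ k ∈ Kk a0, t ≤ k * b} := by
      refine ⟨⟨b * b, Kmul b hb b hb, b, hb, le_refl _⟩, fun t ht => ht.1, ?_, ?_⟩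
      · rintro s hs t ⟨htK, k, hk, hle⟩
        refine ⟨Kmul s hs t htK, s * k, Kmul s hs k hk, ?_⟩
        calc s * t ≤ s * (k * b) := mul_le_mul_right hle s
          _ = s * k * b := (mul_assoc _ _ _).symm
      · rintro t ht x ⟨hxK, k, hk, hle⟩ htx
        exact ⟨ht, k, hk, htx.trans hle⟩
    have heq := hls a0 _ hL
    have hc' : c ∈ {t | t ∈ Kk a0 ∧ ∃ k ∈ Kk a0, t ≤ k * b} := by rw [heq]; exact hc
    exact hc'.2
  intro a ha
  obtain ⟨x, hx, hax⟩ := hrr a0 a ha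
  obtain ⟨k, hk, hxk⟩ := key a ha x hx
  refine ⟨a * k, Kmul a ha k hk, ?_⟩
  calc a ≤ a * a * x := hax
    _ ≤ a * a * (k * a) := mul_le_mul_right hxk _
    _ = a * (a * k) * a := by simp only [mul_assoc]
end

section
/- Let S be an ordered semigroup which is a complete semilattice of left Archimedean ordered subsemigroups and π-regular. Then for all a ∈ S and every ordered idempotent e ∈ E_≤(S), if e ≤ xay for some x, y ∈ S¹, then e ≤ za for some z ∈ S (i.e., a | e implies a |_l e). -/
variable {S : Type*} [Semigroup S] [PartialOrder S]
  [CovariantClass S S (· * ·) (· ≤ ·)]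
  [CovariantClass S S (Function.swap (· * ·)) (· ≤ ·)]

/-- If `S` is a `π`-regular complete semilattice of left Archimedean
subsemigroups, then for every ordered idempotent `e` and every `a`,
`a ∣ e` implies `a ∣_l e`. -/
theorem divides_implies_left_divides (ρ : S → S → Prop)
    (hρ : CompleteSemilatticeCongruence ρ)
    (hla : ∀ a b : S, ρ a b → ∃ m : ℕ, ∃ s : S, ρ s a ∧ ppow a m ≤ s * b)
    (hpi : ∀ a : S, ∃ m : ℕ, ∃ x : S, ppow a m ≤ ppow a m * x * ppow a m) :
    ∀ a e : S, e ≤ e * e → dvd1 a e → ∃ z : S, e ≤ z * a := by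
  intro a e he hd
  have hpow : ∀ m : ℕ, e ≤ ppow e m := by
    intro m
    induction m with
    | zero => exact le_refl e
    | succ n ih =>
      calc e ≤ e * e := he
        _ ≤ ppow e n * e := mul_le_mul_left ih e
  rcases hd with h | ⟨x, h⟩ | ⟨y, h⟩ | ⟨x, y, h⟩
  · exact ⟨e, le_trans he (mul_le_mul_right h e)⟩
  · exact ⟨x, h⟩
  · -- e ≤ a * y
    have h3 : ρ e ((y * e) * a) := by
      refine hρ.equiv.trans (hρ.complete e (a * y) h) ?_
      simpa [mul_assoc] using hρ.comm (e * a) y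
    obtain ⟨m, s, hse, hm⟩ := hla e ((y * e) * a) h3
    exact ⟨s * (y * e), by
      calc e ≤ ppow e m := hpow m
        _ ≤ s * ((y * e) * a) := hm
        _ = s * (y * e) * a := (mul_assoc _ _ _).symm⟩
  · -- e ≤ x * a * y
    have h3 : ρ e ((y * (e * x)) * a) := by
      refine hρ.equiv.trans (hρ.complete e (x * a * y) h) ?_
      simpa [mul_assoc] using hρ.comm ((e * x) * a) y
    obtain ⟨m, s, hse, hm⟩ := hla e ((y * (e * x)) * a) h3
    exact ⟨s * (y * (e * x)), by
      calc e ≤ ppow e m := hpow m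
        _ ≤ s * ((y * (e * x)) * a) := hm
        _ = s * (y * (e * x)) * a := (mul_assoc _ _ _).symm⟩
end
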